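/- For any two points P, P′ ∈ ℍ × Im ℍ there exists a piecewise-C¹ horizontal curve γ : [0,1] → ℍ × Im ℍ with γ(0) = P and γ(1) = P′. -/

import Mathlib

open Quaternion Set

/-- The horizontality condition at a point of differentiability:
`β′(l) = −2 Im(α′(l) · conj(α(l)))`. -/
def HorizontalAt (α β : ℝ → ℍ[ℝ]) (l : ℝ) : Prop :=
  ∃ a' b' : ℍ[ℝ], HasDerivAt α a' l ∧ HasDerivAt β b' l ∧
    b' = (-2 : ℝ) • Quaternion.im (a' * star (α l))

/-- A piecewise-C¹ horizontal curve `(α, β) : [a, b] → ℍ × Im ℍ`: it is continuous,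
takes vertical values in the imaginary quaternions, and away from a finite set of
points it is differentiable with continuous derivative and satisfies the
horizontality condition. -/
def IsPiecewiseHorizontal (α β : ℝ → ℍ[ℝ]) (a b : ℝ) : Prop :=
  ContinuousOn (fun l => (α l, β l)) (Icc a b) ∧
  (∀ l ∈ Icc a b, (β l).re = 0) ∧
  ∃ F : Finset ℝ,
    (∀ l ∈ Icc a b, l ∉ F → HorizontalAt α β l) ∧
    ContinuousOn (fun l => deriv α l) (Icc a b \ F)

/-!
Left translations of `ℍ × Im ℍ` map horizontal curves to horizontal curves. From the identity,
the segment `l ↦ (l • v, 0)` is horizontal, and so is the circle `l ↦ r • exp (l • w)` (`w`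
imaginary) with vertical part `-2 r² l w`; translated to start at the identity, one full turn of
it ends at `(0, v)` for any prescribed imaginary `v`. So from `P` follow a translated segment up to
the fibre over `P'.1`, then a translated loop that corrects the vertical coordinate.
-/

open Topology NormedSpace
open scoped Real

noncomputable def heisMul (g h : ℍ[ℝ] × ℍ[ℝ]) : ℍ[ℝ] × ℍ[ℝ] :=
  (g.1 + h.1, g.2 + h.2 + (2 : ℝ) • Quaternion.im (g.1 * star h.1))

@[simp]
lemma heisMul_fst (g h : ℍ[ℝ] × ℍ[ℝ]) : (heisMul g h).1 = g.1 + h.1 := rfl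

@[simp]
lemma re_heisMul_snd (g h : ℍ[ℝ] × ℍ[ℝ]) : (heisMul g h).2.re = g.2.re + h.2.re := by
  simp [heisMul]

@[simp]
lemma heisMul_zero (g : ℍ[ℝ] × ℍ[ℝ]) : heisMul g 0 = g := by
  simp [heisMul]

@[simp]
lemma heisMul_mk_zero (g : ℍ[ℝ] × ℍ[ℝ]) (t : ℍ[ℝ]) : heisMul g (0, t) = (g.1, g.2 + t) := by
  simp [heisMul]

lemma HasDerivAt.im_const_mul_star {f : ℝ → ℍ[ℝ]} {f' : ℍ[ℝ]} {x : ℝ} (c : ℍ[ℝ])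
    (h : HasDerivAt f f' x) :
    HasDerivAt (fun y => Quaternion.im (c * star (f y))) (Quaternion.im (c * star f')) x :=
  let L : ℍ[ℝ] →ₗ[ℝ] ℍ[ℝ] :=
    { toFun q := Quaternion.im (c * star q)
      map_add' p q := by simp [mul_add]
      map_smul' r q := by simp [Quaternion.star_smul] }
  L.toContinuousLinearMap.hasFDerivAt.comp_hasDerivAt x h

lemma HorizontalAt.congr_of_eventuallyEq {α β α₁ β₁ : ℝ → ℍ[ℝ]} {l : ℝ}
    (h : HorizontalAt α β l) (hα : α₁ =ᶠ[𝓝 l] α) (hβ : β₁ =ᶠ[𝓝 l] β) :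
    HorizontalAt α₁ β₁ l := by
  obtain ⟨a', b', ha, hb, hab⟩ := h
  exact ⟨a', b', ha.congr_of_eventuallyEq hα, hb.congr_of_eventuallyEq hβ, by rwa [hα.eq_of_nhds]⟩

lemma HorizontalAt.heisMul {α β : ℝ → ℍ[ℝ]} {l : ℝ} (h : HorizontalAt α β l) (g : ℍ[ℝ] × ℍ[ℝ]) :
    HorizontalAt (fun x => (heisMul g (α x, β x)).1) (fun x => (heisMul g (α x, β x)).2) l := by
  obtain ⟨a', b', ha, hb, rfl⟩ := h
  refine ⟨a', _, ha.const_add g.1,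
    (hb.const_add g.2).add ((ha.im_const_mul_star g.1).const_smul (2 : ℝ)), ?_⟩
  rw [show g.1 * star a' = star (a' * star g.1) by simp [star_mul]]
  simp only [heisMul_fst, Quaternion.im_star, star_add, mul_add, Quaternion.im_add]
  module

structure IsHorizontalCurve (γ : ℝ → ℍ[ℝ] × ℍ[ℝ]) : Prop where
  horizontalAt (l : ℝ) : HorizontalAt (fun x => (γ x).1) (fun x => (γ x).2) l
  continuous_deriv_fst : Continuous (deriv fun x => (γ x).1)
  re_snd (l : ℝ) : (γ l).2.re = 0

namespace IsHorizontalCurve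

variable {γ : ℝ → ℍ[ℝ] × ℍ[ℝ]}

lemma continuous (hγ : IsHorizontalCurve γ) : Continuous γ := by
  refine continuous_iff_continuousAt.2 fun l => ?_
  obtain ⟨a', b', ha, hb, -⟩ := hγ.horizontalAt l
  exact ha.continuousAt.prodMk hb.continuousAt

lemma heisMul (hγ : IsHorizontalCurve γ) {g : ℍ[ℝ] × ℍ[ℝ]} (hg : g.2.re = 0) :
    IsHorizontalCurve fun x => heisMul g (γ x) where
  horizontalAt l := (hγ.horizontalAt l).heisMul g
  continuous_deriv_fst := by
    simpa only [heisMul_fst, deriv_const_add'] using hγ.continuous_deriv_fst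
  re_snd l := by simp [hg, hγ.re_snd]

lemma comp_sub_const (hγ : IsHorizontalCurve γ) (b : ℝ) : IsHorizontalCurve fun x => γ (x - b) where
  horizontalAt l := by
    obtain ⟨a', b', ha, hb, hab⟩ := hγ.horizontalAt (l - b)
    exact ⟨a', b', ha.comp_sub_const l b, hb.comp_sub_const l b, hab⟩
  continuous_deriv_fst := by
    have hderiv : deriv (fun x => (γ (x - b)).1) = fun x => deriv (fun x => (γ x).1) (x - b) :=
      funext fun x => deriv_comp_sub_const (fun x => (γ x).1) b x
    rw [hderiv]
    exact hγ.continuous_deriv_fst.comp (continuous_sub_right b)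
  re_snd l := hγ.re_snd (l - b)

lemma isPiecewiseHorizontal_ite {γ₁ γ₂ : ℝ → ℍ[ℝ] × ℍ[ℝ]} (h₁ : IsHorizontalCurve γ₁)
    (h₂ : IsHorizontalCurve γ₂) {b : ℝ} (hb : γ₁ b = γ₂ b) (a c : ℝ) :
    IsPiecewiseHorizontal (fun l => (if l ≤ b then γ₁ l else γ₂ l).1)
      (fun l => (if l ≤ b then γ₁ l else γ₂ l).2) a c := by
  set γ := fun l => if l ≤ b then γ₁ l else γ₂ l
  have hloc : ∀ l ≠ b, ∃ η, IsHorizontalCurve η ∧ γ =ᶠ[𝓝 l] η := by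
    intro l hl
    rcases hl.lt_or_gt with h | h
    · exact ⟨γ₁, h₁, by filter_upwards [Iio_mem_nhds h] with x hx using if_pos hx.le⟩
    · exact ⟨γ₂, h₂, by filter_upwards [Ioi_mem_nhds h] with x hx using if_neg (not_le.2 hx)⟩
  have hcont : Continuous γ := Continuous.if_le h₁.continuous h₂.continuous continuous_id
    continuous_const fun x (hx : x = b) => hx ▸ hb
  refine ⟨hcont.continuousOn, fun l _ => ?_, {b}, fun l _ hl => ?_, fun l hl => ?_⟩
  · dsimp only [γ]
    split_ifs
    exacts [h₁.re_snd l, h₂.re_snd l]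
  · obtain ⟨η, hη, hγη⟩ := hloc l (by simpa using hl)
    exact (hη.horizontalAt l).congr_of_eventuallyEq (hγη.fun_comp Prod.fst) (hγη.fun_comp Prod.snd)
  · obtain ⟨η, hη, hγη⟩ := hloc l (by simpa using hl.2)
    exact (hη.continuous_deriv_fst.continuousAt.congr
      (hγη.fun_comp Prod.fst).deriv.symm).continuousWithinAt

end IsHorizontalCurve

lemma isHorizontalCurve_smul_const (v : ℍ[ℝ]) : IsHorizontalCurve fun l => (l • v, 0) where
  horizontalAt l := ⟨v, 0, by simpa using (hasDerivAt_id l).smul_const v, hasDerivAt_const l 0, by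
    simp [Quaternion.star_smul, Quaternion.self_mul_star]⟩
  continuous_deriv_fst := by
    rw [show deriv (fun l : ℝ => l • v) = fun _ => v from
      funext fun l => by simpa using ((hasDerivAt_id l).smul_const v).deriv]
    exact continuous_const
  re_snd l := rfl

lemma Quaternion.exp_mul_star_exp_of_re_eq_zero {q : ℍ[ℝ]} (hq : q.re = 0) :
    exp q * star (exp q) = 1 := by
  rw [Quaternion.self_mul_star, Quaternion.normSq_exp, hq, exp_zero, one_pow, Quaternion.coe_one]

lemma isHorizontalCurve_circle (r : ℝ) {w : ℍ[ℝ]} (hw : w.re = 0) :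
    IsHorizontalCurve fun l => (r • exp (l • w), (-2 * r ^ 2 * l) • w) where
  horizontalAt l := ⟨_, _, (hasDerivAt_exp_smul_const' w l).const_smul r,
    ((hasDerivAt_id l).const_mul (-2 * r ^ 2)).smul_const w, by
    have hE := Quaternion.exp_mul_star_exp_of_re_eq_zero (q := l • w) (by simp [hw])
    have hw' : w.im = w := by simpa [hw] using Quaternion.re_add_im w
    rw [Quaternion.star_smul, smul_mul_smul_comm, mul_assoc w, hE, mul_one w, Quaternion.im_smul,
      hw']
    module⟩
  continuous_deriv_fst := by
    rw [show deriv (fun l : ℝ => r • exp (l • w)) = fun l => r • (w * exp (l • w)) from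
      funext fun l => ((hasDerivAt_exp_smul_const' w l).const_smul r).deriv]
    exact ((differentiable_exp_smul_const ℝ w).continuous.const_mul w).const_smul r
  re_snd l := by simp [hw]

lemma exists_exp_smul_eq_one_and_smul_eq {v : ℍ[ℝ]} (hv : v.re = 0) {T : ℝ} (hT : 0 < T) :
    ∃ (r : ℝ) (w : ℍ[ℝ]), w.re = 0 ∧ exp (T • w) = 1 ∧ (-2 * r ^ 2 * T) • w = v := by
  rcases eq_or_ne v 0 with rfl | hv0
  · exact ⟨0, 0, rfl, by simp, by simp⟩
  have hn : 0 < ‖v‖ := norm_pos_iff.2 hv0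
  refine ⟨√(‖v‖ / (4 * π)), (-(2 * π) / (T * ‖v‖)) • v, by simp [hv], ?_, ?_⟩
  · have hTw : T • (-(2 * π) / (T * ‖v‖)) • v = (-(2 * π) / ‖v‖) • v := by
      rw [smul_smul]; congr 1; field_simp
    have hnorm : ‖(-(2 * π) / ‖v‖) • v‖ = 2 * π := by
      rw [norm_smul, norm_div, norm_neg, Real.norm_of_nonneg (by positivity), norm_norm]
      field_simp
    rw [hTw, Quaternion.exp_of_re_eq_zero _ (by simp [hv]), hnorm]
    simp
  · rw [Real.sq_sqrt (by positivity), smul_smul]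
    convert one_smul ℝ v using 2
    field_simp
    norm_num

lemma exists_isHorizontalCurve_zero_to_vertical {v : ℍ[ℝ]} (hv : v.re = 0) {T : ℝ} (hT : 0 < T) :
    ∃ γ, IsHorizontalCurve γ ∧ γ 0 = 0 ∧ γ T = (0, v) := by
  obtain ⟨r, w, hw, hexp, rfl⟩ := exists_exp_smul_eq_one_and_smul_eq hv hT
  -- `(-r, 0)` is the inverse of the starting point `(r, 0)` of the circle
  have hstart : ∀ t, heisMul (-(r • 1), 0) (r • 1, t) = (0, t) := fun t => by simp [heisMul]
  refine ⟨fun l => heisMul (-(r • 1), 0) (r • exp (l • w), (-2 * r ^ 2 * l) • w),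
    (isHorizontalCurve_circle r hw).heisMul rfl, ?_, ?_⟩
  · simpa [Prod.zero_eq_mk] using hstart 0
  · simpa [hexp] using hstart _

theorem exists_horizontal_curve_joining (P P' : ℍ[ℝ] × ℍ[ℝ])
    (hP : P.2.re = 0) (hP' : P'.2.re = 0) :
    ∃ α β : ℝ → ℍ[ℝ], IsPiecewiseHorizontal α β 0 1 ∧
      (α 0, β 0) = P ∧ (α 1, β 1) = P' := by
  set Q := heisMul P (P'.1 - P.1, 0)
  have hQ : Q.2.re = 0 := by simp [Q, hP]
  obtain ⟨η, hη, hη0, hη1⟩ :=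
    exists_isHorizontalCurve_zero_to_vertical (v := P'.2 - Q.2) (by simp [hP', hQ]) one_half_pos
  have hseg := (isHorizontalCurve_smul_const ((2 : ℝ) • (P'.1 - P.1))).heisMul hP
  have hloop := (hη.comp_sub_const (1 / 2)).heisMul hQ
  refine ⟨_, _, hseg.isPiecewiseHorizontal_ite hloop (b := 1 / 2) ?_ 0 1, ?_, ?_⟩
  · simp [hη0, Q]
  · simp
  · norm_num [hη1, Q]
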